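/- Let A = [a_1,...,a_r] be an admissible twig and let n ≥ 2 and ℓ ≥ 0 be integers. Let d be the determinant of the 4×4 matrix with rows [2, −1, −1, −1], [−(n·d(A̲) − d(Ā̲)), n·d(A) − d(Ā), 0, 0], [−(d(A) − d(A̲)), 0, d(A), 0], [−ℓ, 0, 0, ℓ+1], and let d' be the determinant of the 3×3 matrix with rows [0, −1, −1], [(n·d(A) − d(Ā)) − (n·d(A̲) − d(Ā̲)) − 1, n·d(A) − d(Ā), 0], [d(A̲) − 1, 0, d(A)]. Then d = d' if and only if ℓ = (n+1)·d(A) − d(Ā). -/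

import Mathlib

open Matrix BigOperators

/-- The intersection-type matrix of a twig `A = [a_1,...,a_r]`: the `r × r` symmetric
tridiagonal matrix with diagonal entries `a_1,...,a_r` and `-1` on the sub/super-diagonals. -/
def twigMatrix (A : List ℤ) : Matrix (Fin A.length) (Fin A.length) ℤ :=
  fun i j =>
    if i = j then A.get i
    else if (i : ℕ) + 1 = (j : ℕ) ∨ (j : ℕ) + 1 = (i : ℕ) then -1
    else 0

/-- The determinant `d(A)` of a twig; in particular `d([]) = 1`. -/
def twigDet (A : List ℤ) : ℤ := (twigMatrix A).det

/-- A twig is admissible if it is nonempty and all its entries are `≥ 2`. -/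
def Admissible (A : List ℤ) : Prop := A ≠ [] ∧ ∀ a ∈ A, 2 ≤ a

/-- `d(Ā̲)`, i.e. `d([a_2,...,a_{r-1}])`, with the convention that it is `0` when `r = 1`. -/
def twigDetMid (A : List ℤ) : ℤ :=
  if A.length ≤ 1 then 0 else twigDet A.tail.dropLast

/-! Expanding both determinants, `d - d' = (n+1)·d(A) - d(Ā) + ℓ·(d(A)·d(Ā̲) - d(Ā)·d(A̲))`.
The bracket is the continuant identity `d(A)·d(Ā̲) - d(Ā)·d(A̲) = -1`, which follows by induction
from the three-term recurrence `d([a, b, …]) = a·d([b, …]) - d([…])`, itself a Laplace expansion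
along the first row of the tridiagonal matrix. -/

namespace Matrix

variable {R : Type*} [CommRing R]

theorem det_succ_succ_of_row_col_zero {n : ℕ}
    (M : Matrix (Fin (n + 2)) (Fin (n + 2)) R)
    (hrow : ∀ j : Fin n, M 0 j.succ.succ = 0) (hcol : ∀ i : Fin n, M i.succ.succ 0 = 0) :
    M.det = M 0 0 * (M.submatrix Fin.succ Fin.succ).det
      - M 0 1 * M 1 0 * (M.submatrix (Fin.succ ∘ Fin.succ) (Fin.succ ∘ Fin.succ)).det := by
  have hminor : (M.submatrix Fin.succ (Fin.succAbove 1)).det =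
      M 1 0 * (M.submatrix (Fin.succ ∘ Fin.succ) (Fin.succ ∘ Fin.succ)).det := by
    rw [det_succ_column_zero, Fin.sum_univ_succ]
    simp [hcol]
    rfl
  rw [det_succ_row_zero, Fin.sum_univ_succ, Fin.sum_univ_succ]
  simp [hrow, hminor]
  ring

theorem det_arrowhead_three (a b c f g p q : R) :
    (!![a, b, c; f, p, 0; g, 0, q] : Matrix (Fin 3) (Fin 3) R).det =
      a * p * q - b * f * q - c * g * p := by
  simp [det_fin_three]
  ring

theorem det_arrowhead_four (a b c e f g h p q r : R) :
    (!![a, b, c, e; f, p, 0, 0; g, 0, q, 0; h, 0, 0, r] : Matrix (Fin 4) (Fin 4) R).det =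
      a * p * q * r - b * f * q * r - c * g * p * r - e * h * p * q := by
  simp [det_succ_row_zero, Fin.sum_univ_succ, Fin.succAbove]
  ring

end Matrix

theorem twigDet_nil : twigDet [] = 1 :=
  det_fin_zero

theorem twigDet_singleton (a : ℤ) : twigDet [a] = a := by
  simp [twigDet, twigMatrix]

theorem twigMatrix_cons_submatrix_succ (a : ℤ) (B : List ℤ) :
    (twigMatrix (a :: B)).submatrix Fin.succ Fin.succ = twigMatrix B := by
  ext i j
  simp [twigMatrix, Fin.succ_inj]

theorem twigDet_cons_cons (a b : ℤ) (C : List ℤ) :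
    twigDet (a :: b :: C) = a * twigDet (b :: C) - twigDet C := by
  have hsub := twigMatrix_cons_submatrix_succ a (b :: C)
  have hsub₂ : (twigMatrix (a :: b :: C)).submatrix (Fin.succ ∘ Fin.succ) (Fin.succ ∘ Fin.succ) =
      twigMatrix C := by
    rw [← submatrix_submatrix, hsub, twigMatrix_cons_submatrix_succ]
  rw [twigDet, Matrix.det_succ_succ_of_row_col_zero _ (by simp [twigMatrix, Fin.ext_iff])
    (by simp [twigMatrix, Fin.ext_iff]), hsub, hsub₂]
  simp [twigMatrix, twigDet]

theorem twigDetMid_cons_cons (a b : ℤ) (C : List ℤ) :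
    twigDetMid (a :: b :: C) = twigDet (b :: C).dropLast := by
  simp [twigDetMid]

theorem twigDet_mul_twigDetMid_sub_tail_mul_dropLast (A : List ℤ) :
    twigDet A * twigDetMid A - twigDet A.tail * twigDet A.dropLast = -1 := by
  induction A with
  | nil => simp [twigDetMid, twigDet_nil]
  | cons a B ih =>
    rcases B with _ | ⟨b, _ | ⟨c, C⟩⟩
    · simp [twigDetMid, twigDet_nil, twigDet_singleton]
    · simp [twigDetMid, twigDet_cons_cons, twigDet_nil, twigDet_singleton]
      ring
    · simp only [twigDetMid_cons_cons, List.tail_cons, List.dropLast_cons_cons] at ih ⊢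
      rw [twigDet_cons_cons a b, twigDet_cons_cons a b]
      linear_combination ih

theorem stmt13_general (A : List ℤ) (n ℓ : ℤ) :
    (!![2, -1, -1, -1;
        -(n * twigDet A.dropLast - twigDetMid A), n * twigDet A - twigDet A.tail, 0, 0;
        -(twigDet A - twigDet A.dropLast), 0, twigDet A, 0;
        -ℓ, 0, 0, ℓ + 1] : Matrix (Fin 4) (Fin 4) ℤ).det =
      (!![0, -1, -1;
          (n * twigDet A - twigDet A.tail) - (n * twigDet A.dropLast - twigDetMid A) - 1,
            n * twigDet A - twigDet A.tail, 0;
          twigDet A.dropLast - 1, 0, twigDet A] : Matrix (Fin 3) (Fin 3) ℤ).det ↔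
      ℓ = (n + 1) * twigDet A - twigDet A.tail := by
  have key := twigDet_mul_twigDetMid_sub_tail_mul_dropLast A
  rw [Matrix.det_arrowhead_four, Matrix.det_arrowhead_three]
  constructor <;> intro h <;> linear_combination -h + ℓ * key

/-- with `d` and `d'` the determinants of the indicated `4 × 4` and
`3 × 3` matrices, `d = d'` if and only if `ℓ = (n+1)·d(A) − d(Ā)`. -/
theorem stmt13 (A : List ℤ) (hA : Admissible A) (n ℓ : ℤ) (hn : 2 ≤ n) (hℓ : 0 ≤ ℓ) :
    (!![2, -1, -1, -1;
        -(n * twigDet A.dropLast - twigDetMid A), n * twigDet A - twigDet A.tail, 0, 0;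
        -(twigDet A - twigDet A.dropLast), 0, twigDet A, 0;
        -ℓ, 0, 0, ℓ + 1] : Matrix (Fin 4) (Fin 4) ℤ).det =
      (!![0, -1, -1;
          (n * twigDet A - twigDet A.tail) - (n * twigDet A.dropLast - twigDetMid A) - 1,
            n * twigDet A - twigDet A.tail, 0;
          twigDet A.dropLast - 1, 0, twigDet A] : Matrix (Fin 3) (Fin 3) ℤ).det ↔
      ℓ = (n + 1) * twigDet A - twigDet A.tail :=
  stmt13_general A n ℓ
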